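/- For any positive integer n and subset J ⊆ [n−1], the image of the fundamental quasi-symmetric function F_{n,J} under the homomorphism Ψ equals q^{|J|+1}/(1−q)^n, i.e., (1−q)·Σ_r C(r+n−|J|−1, n)·q^r. -/

import Mathlib

open Finset

namespace CQSym

/-- The exponent-vector (weight) of a word with letters among the positive
integers: the monomial `x_{w 0} ⋯ x_{w (n-1)}`. -/
noncomputable def wt {n : ℕ} (w : Fin n → ℕ+) : ℕ+ →₀ ℕ := ∑ i, Finsupp.single (w i) 1

/-- The fundamental quasi-symmetric function `F_{n,J}` for `J ⊆ [n-1]`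
(1-based positions): the sum of `x_{w 0} ⋯ x_{w (n-1)}` over weakly increasing
words with a strict ascent at every position of `J`. -/
noncomputable def Fqsym (n : ℕ) (J : Finset ℕ) : MvPowerSeries ℕ+ ℤ :=
  fun d => (Nat.card {w : Fin n → ℕ+ //
    Monotone w ∧ (∀ i : Fin n, (i : ℕ) + 1 ∈ J → w i < w (finRotate n i)) ∧
    wt w = d} : ℤ)

/-- The monomial quasi-symmetric function `M_{n,J}` for `J ⊆ [n-1]`:
the sum over weakly increasing words with a strict ascent exactly at the
positions of `J`. -/
noncomputable def Mqsym (n : ℕ) (J : Finset ℕ) : MvPowerSeries ℕ+ ℤ :=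
  fun d => (Nat.card {w : Fin n → ℕ+ //
    Monotone w ∧
    (∀ i : Fin n, (i : ℕ) + 1 < n → (((i : ℕ) + 1 ∈ J) ↔ w i < w (finRotate n i))) ∧
    wt w = d} : ℤ)

/-- The fundamental cyclic quasi-symmetric function `F^cyc_{n,J}` for
`J ⊆ [n]` (1-based positions): the sum of `x_{w 0} ⋯ x_{w (n-1)}` over pairs
`(w, k)` such that `w` is cyclically weakly increasing from position `k`
and has a (cyclic) strict ascent at every position of `J` except possibly
at the position just before `k`. -/
noncomputable def cFqsym (n : ℕ) (J : Finset ℕ) : MvPowerSeries ℕ+ ℤ :=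
  fun d => (Nat.card {p : (Fin n → ℕ+) × Fin n //
    Monotone (fun i : Fin n => p.1 (p.2 + i)) ∧
    (∀ i : Fin n, (i : ℕ) + 1 ∈ J → i ≠ (finRotate n).symm p.2 →
      p.1 i < p.1 (finRotate n i)) ∧
    wt p.1 = d} : ℤ)

/-- The monomial cyclic quasi-symmetric function `M^cyc_{n,J}` for
`J ⊆ [n]`: the sum of `x_{w 0} ⋯ x_{w (n-1)}` over pairs `(w, k)` such that
`w` is cyclically weakly increasing from position `k`, the position just
before `k` belongs to `J`, and at every other position the (cyclic) strict
ascents of `w` are exactly the positions of `J`. -/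
noncomputable def cMqsym (n : ℕ) (J : Finset ℕ) : MvPowerSeries ℕ+ ℤ :=
  fun d => (Nat.card {p : (Fin n → ℕ+) × Fin n //
    Monotone (fun i : Fin n => p.1 (p.2 + i)) ∧
    (((finRotate n).symm p.2 : Fin n) : ℕ) + 1 ∈ J ∧
    (∀ i : Fin n, i ≠ (finRotate n).symm p.2 →
      (((i : ℕ) + 1 ∈ J) ↔ p.1 i < p.1 (finRotate n i))) ∧
    wt p.1 = d} : ℤ)

/-- The cyclic shift `J - i` of a subset `J ⊆ [n]`, computed modulo `n`,
with representatives `1, …, n`. -/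
def cshift (n : ℕ) (J : Finset ℕ) (i : ℕ) : Finset ℕ :=
  J.image fun j => (j + n - i - 1) % n + 1

/-- The complete homogeneous symmetric function `h_n`: the sum of all
monomials of degree `n`. -/
noncomputable def hqsym (n : ℕ) : MvPowerSeries ℕ+ ℤ :=
  fun d => if d.sum (fun _ e => e) = n then 1 else 0

open scoped Classical in
/-- The elementary symmetric function `e_n`: the sum of all squarefree
monomials of degree `n`. -/
noncomputable def eqsym (n : ℕ) : MvPowerSeries ℕ+ ℤ :=
  fun d => if d.sum (fun _ e => e) = n ∧ ∀ x, d x ≤ 1 then 1 else 0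

/-- The Schur function of hook shape `(n-k, 1^k)`, defined via semistandard
tableaux: a weakly increasing first row of length `n-k`, a strictly
increasing leg of length `k` below its first cell. -/
noncomputable def hookSchur (n k : ℕ) : MvPowerSeries ℕ+ ℤ :=
  fun d => (Nat.card {p : (Fin (n - k) → ℕ+) × (Fin k → ℕ+) //
    Monotone p.1 ∧ StrictMono p.2 ∧
    (∀ (h1 : 0 < n - k) (h2 : 0 < k), p.1 ⟨0, h1⟩ < p.2 ⟨0, h2⟩) ∧
    wt p.1 + wt p.2 = d} : ℤ)

/-- The descent number of a word with (distinct) integer letters. -/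
def des {N : ℕ} (w : Fin N → ℤ) : ℕ :=
  (Finset.univ.filter fun i : Fin N => (i : ℕ) + 1 < N ∧ w (finRotate N i) < w i).card

/-- The cyclic descent number of a word with (distinct) integer letters. -/
def cdes {N : ℕ} (w : Fin N → ℤ) : ℕ :=
  (Finset.univ.filter fun i : Fin N => w (finRotate N i) < w i).card

/-- `w` is a shuffle of `u` and `v`. -/
def IsShuffle {m n : ℕ} (u : Fin m → ℤ) (v : Fin n → ℤ) (w : Fin (m + n) → ℤ) : Prop :=
  ∃ (f : Fin m → Fin (m + n)) (g : Fin n → Fin (m + n)),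
    StrictMono f ∧ StrictMono g ∧ (∀ i, w (f i) = u i) ∧ (∀ j, w (g j) = v j) ∧
    (∀ x, (∃ i, f i = x) ∨ (∃ j, g j = x))

/-- The cyclic class `[w]` is a cyclic shuffle of `[u]` and `[v]`: some
cyclic rotation of `w` is a shuffle of cyclic rotations of `u` and `v`. -/
def IsCyclicShuffle {m n : ℕ} (u : Fin m → ℤ) (v : Fin n → ℤ) (w : Fin (m + n) → ℤ) : Prop :=
  ∃ (kw : Fin (m + n)) (ku : Fin m) (kv : Fin n),
    IsShuffle (fun i => u (i + ku)) (fun i => v (i + kv)) (fun i => w (i + kw))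

/-- Rotation equivalence of words satisfying a property `P`;  `Quot` of this
relation is the set of cyclic equivalence classes. -/
def RotRel {N : ℕ} (P : (Fin N → ℤ) → Prop) (w₁ w₂ : {w : Fin N → ℤ // P w}) : Prop :=
  ∃ k : Fin N, ∀ i, w₁.val i = w₂.val (i + k)

/-- Binomial coefficient with integer upper and lower arguments, zero for
negative lower argument. -/
noncomputable def zchoose (a b : ℤ) : ℤ := if 0 ≤ b then Ring.choose a b.toNat else 0

/-- The map `Ψ`, sending a monomial `x_{i₁}^{m₁} ⋯ x_{i_k}^{m_k}`
(`i₁ < … < i_k`) to `q^{i_k}`, extended linearly. -/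
noncomputable def psi (f : MvPowerSeries ℕ+ ℤ) : PowerSeries ℤ :=
  PowerSeries.mk fun r =>
    if r = 0 then MvPowerSeries.coeff 0 f
    else ∑ᶠ d ∈ {d : ℕ+ →₀ ℕ |
        ∃ m ∈ d.support, (∀ m' ∈ d.support, m' ≤ m) ∧ (m : ℕ) = r},
      MvPowerSeries.coeff d f

/-- The product `⊙` on `ℤ[[q]]` determined by `q^i ⊙ q^j = q^{max(i,j)}`. -/
noncomputable def odot (a b : PowerSeries ℤ) : PowerSeries ℤ :=
  PowerSeries.mk fun r =>
    (PowerSeries.coeff r a) * (∑ s ∈ Finset.range (r + 1), PowerSeries.coeff s b) +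
    (∑ s ∈ Finset.range r, PowerSeries.coeff s a) * (PowerSeries.coeff r b)

/-- A multivariate power series of bounded (total) degree. -/
def BoundedDeg (f : MvPowerSeries ℕ+ ℤ) : Prop :=
  ∃ D, ∀ d : ℕ+ →₀ ℕ, D < d.sum (fun _ e => e) → MvPowerSeries.coeff d f = 0

/-- Cellini's cyclic descent set of a permutation (0-based positions). -/
def cDesF {n : ℕ} (w : Fin n → Fin n) : Finset (Fin n) :=
  Finset.univ.filter fun i => w (finRotate n i) < w i

/-- The ordinary descent set of a permutation (0-based positions). -/
def DesF {n : ℕ} (w : Fin n → Fin n) : Finset (Fin n) :=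
  Finset.univ.filter fun i => (i : ℕ) + 1 < n ∧ w (finRotate n i) < w i


/-! For a weakly increasing word the largest letter is the last one, so the coefficient of `q^r`
in `Ψ(F_{n,J})` counts the words of `F_{n,J}` ending in `r`. Such a word `w` is weakly
increasing with strict ascents at `J` exactly when `i ↦ w i - #{j ∈ J | j ≤ i}` is weakly
increasing, so `v i = w i - #{j ∈ J | j ≤ i} - 1` identifies these words with weakly increasing
sequences of naturals ending in `r - |J| - 1`. By stars and bars (`v i + i` is strictly
increasing, hence determined by an `(n-1)`-subset of `[0, r - |J| + n - 2)`) there are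
`C(r - |J| + n - 2, n - 1)` of them: the coefficient of `q^r` in `q^{|J|+1}/(1-q)^n`. -/

theorem val_le_of_strictMono {m : ℕ} {u : Fin (m + 1) → ℕ} (hu : StrictMono u)
    (i : Fin (m + 1)) : (i : ℕ) ≤ u i := by
  induction i using Fin.induction with
  | zero => simp
  | succ i ih =>
    have := hu (Fin.castSucc_lt_succ (i := i))
    simp only [Fin.val_castSucc, Fin.val_succ] at ih ⊢
    omega

def monotoneEquivStrictMono (m s : ℕ) :
    {v : Fin (m + 1) → ℕ // Monotone v ∧ v (Fin.last m) = s} ≃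
      {u : Fin (m + 1) → ℕ // StrictMono u ∧ u (Fin.last m) = s + m} where
  toFun v := ⟨fun i => v.1 i + i, v.2.1.add_strictMono Fin.val_strictMono, by simp [v.2.2]⟩
  invFun u := ⟨fun i => u.1 i - i, Fin.monotone_iff_le_succ.2 fun i => by
      have := u.2.1 (Fin.castSucc_lt_succ (i := i))
      simp only [Fin.val_castSucc, Fin.val_succ] at this ⊢
      omega,
    by simp [u.2.2]⟩
  left_inv v := by ext; simp
  right_inv u := by ext i; have := val_le_of_strictMono u.2.1 i; simp only; omega

def strictMonoEquivOrderEmbedding (m N : ℕ) :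
    {u : Fin (m + 1) → ℕ // StrictMono u ∧ u (Fin.last m) = N} ≃ (Fin m ↪o Fin N) where
  toFun u := OrderEmbedding.ofStrictMono
    (fun i => ⟨u.1 i.castSucc, (u.2.1 (Fin.castSucc_lt_last i)).trans_eq u.2.2⟩)
    fun _ _ h => u.2.1 (Fin.castSucc_lt_castSucc_iff.2 h)
  invFun e := ⟨Fin.snoc (α := fun _ => ℕ) (fun i => e i) N, by
      intro a b hab
      obtain ⟨a, rfl⟩ := Fin.exists_castSucc_eq.2 (Fin.ne_last_of_lt hab)
      induction b using Fin.lastCases with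
      | last => simp
      | cast b => simpa using Fin.castSucc_lt_castSucc_iff.1 hab, by simp⟩
  left_inv u := by
    ext i
    induction i using Fin.lastCases with
    | last => simp [u.2.2]
    | cast i => simp only [Fin.snoc_castSucc]; rfl
  right_inv e := by ext; simp

theorem card_orderEmbedding_fin (m N : ℕ) : Nat.card (Fin m ↪o Fin N) = N.choose m := by
  rw [Nat.card_congr Set.powersetCard.ofFinEmbEquiv, Set.powersetCard.card, Nat.card_fin]

theorem card_monotone_fin_last (m s : ℕ) :
    Nat.card {v : Fin (m + 1) → ℕ // Monotone v ∧ v (Fin.last m) = s} = (s + m).choose m := by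
  rw [Nat.card_congr ((monotoneEquivStrictMono m s).trans (strictMonoEquivOrderEmbedding m _)),
    card_orderEmbedding_fin]

theorem mem_support_wt {n : ℕ} {w : Fin n → ℕ+} {x : ℕ+} :
    x ∈ (wt w).support ↔ ∃ i, w i = x := by
  classical
  simp [wt, Finsupp.finsetSum_apply, Finsupp.single_apply]

theorem wt_ne_zero {m : ℕ} (w : Fin (m + 1) → ℕ+) : wt w ≠ 0 := fun h => by
  simpa [h] using (mem_support_wt (w := w)).2 ⟨0, rfl⟩

theorem isGreatest_support_wt {m : ℕ} {w : Fin (m + 1) → ℕ+} (hw : Monotone w) :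
    IsGreatest ((wt w).support : Set ℕ+) (w (Fin.last m)) :=
  ⟨mem_support_wt.2 ⟨_, rfl⟩, fun _ hx => by
    obtain ⟨i, rfl⟩ := mem_support_wt.1 hx
    exact hw (Fin.le_last i)⟩

theorem exists_greatest_support_wt_iff {m : ℕ} {w : Fin (m + 1) → ℕ+} (hw : Monotone w)
    (r : ℕ) :
    (∃ x ∈ (wt w).support, (∀ y ∈ (wt w).support, y ≤ x) ∧ (x : ℕ) = r) ↔
      (w (Fin.last m) : ℕ) = r :=
  ⟨fun ⟨x, hx, hmax, hxr⟩ => by rwa [(isGreatest_support_wt hw).unique ⟨hx, hmax⟩],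
    fun h => ⟨_, (isGreatest_support_wt hw).1, (isGreatest_support_wt hw).2, h⟩⟩

theorem finite_setOf_monotone_last_eq (m r : ℕ) :
    {w : Fin (m + 1) → ℕ+ | Monotone w ∧ (w (Fin.last m) : ℕ) = r}.Finite :=
  (Set.finite_Iic fun _ => r.toPNat').subset fun w ⟨hw, _⟩ i => by
    change w i ≤ r.toPNat'
    rw [← PNat.coe_le_coe, Nat.toPNat'_coe]
    have := (PNat.coe_le_coe _ _).2 (hw (Fin.le_last i))
    split_ifs <;> omega

theorem coeff_psi_of_monotone {m : ℕ} (Q : (Fin (m + 1) → ℕ+) → Prop)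
    {f : MvPowerSeries ℕ+ ℤ} (hf : ∀ d, MvPowerSeries.coeff d f =
      Nat.card {w : Fin (m + 1) → ℕ+ // Monotone w ∧ Q w ∧ wt w = d}) (r : ℕ) :
    PowerSeries.coeff r (psi f) =
      Nat.card {w : Fin (m + 1) → ℕ+ // Monotone w ∧ Q w ∧ (w (Fin.last m) : ℕ) = r} := by
  classical
  simp only [psi, PowerSeries.coeff_mk]
  obtain rfl | hr := eq_or_ne r 0
  · have h (w : Fin (m + 1) → ℕ+) : wt w ≠ 0 ∧ (w (Fin.last m) : ℕ) ≠ 0 :=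
      ⟨wt_ne_zero w, (w _).ne_zero⟩
    simp [hf, h]
  rw [if_neg hr]
  have hfin :
      {w : Fin (m + 1) → ℕ+ | Monotone w ∧ Q w ∧ (w (Fin.last m) : ℕ) = r}.Finite :=
    (finite_setOf_monotone_last_eq m r).subset fun _ hw => ⟨hw.1, hw.2.2⟩
  set T := hfin.toFinset
  have hT {w} : w ∈ T ↔ Monotone w ∧ Q w ∧ (w (Fin.last m) : ℕ) = r := hfin.mem_toFinset
  set S : Set (ℕ+ →₀ ℕ) :=
    {d | ∃ x ∈ d.support, (∀ y ∈ d.support, y ≤ x) ∧ (x : ℕ) = r}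
  have hwt {d} (hd : d ∈ T.image wt) : d ∈ S := by
    obtain ⟨w, hw, rfl⟩ := Finset.mem_image.1 hd
    exact (exists_greatest_support_wt_iff (hT.1 hw).1 r).2 (hT.1 hw).2.2
  have hfiber {d} (hd : d ∈ S) (w) :
      (Monotone w ∧ Q w ∧ wt w = d) ↔ w ∈ {w ∈ T | wt w = d} := by
    rw [Finset.mem_filter, hT]
    exact ⟨fun ⟨hw, hQ, hwd⟩ =>
        ⟨⟨hw, hQ, (exists_greatest_support_wt_iff hw r).1 (hwd ▸ hd)⟩, hwd⟩,
      fun ⟨⟨hw, hQ, _⟩, hwd⟩ => ⟨hw, hQ, hwd⟩⟩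
  rw [finsum_mem_eq_sum_of_subset _ (t := T.image wt) ?_ fun _ => hwt, ← Set.coe_ofPred,
    Nat.card_eq_card_finite_toFinset hfin, Finset.card_eq_sum_card_image wt T, Nat.cast_sum]
  · exact Finset.sum_congr rfl fun d hd => by
      rw [hf, Nat.subtype_card _ fun w => (hfiber (hwt hd) w).symm]
  · rintro d ⟨hd, hsupp⟩
    obtain ⟨w, hw⟩ := Nat.card_ne_zero.1 (by simpa [hf] using hsupp) |>.1
    exact Finset.mem_image.2 ⟨w, (Finset.mem_filter.1 ((hfiber hd w).1 hw)).1, hw.2.2⟩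

def StrictlyAscendsAt (J : Finset ℕ) {n : ℕ} (w : Fin n → ℕ+) : Prop :=
  ∀ i : Fin n, (i : ℕ) + 1 ∈ J → w i < w (finRotate n i)

def ascentCount (J : Finset ℕ) (i : ℕ) : ℕ := #{j ∈ J | j ≤ i}

theorem ascentCount_succ (J : Finset ℕ) (i : ℕ) :
    ascentCount J (i + 1) = ascentCount J i + if i + 1 ∈ J then 1 else 0 := by
  simp only [ascentCount, Finset.card_filter, ← Finset.sum_ite_eq' J (i + 1) (fun _ => 1),
    ← Finset.sum_add_distrib]
  exact Finset.sum_congr rfl fun j _ => by split_ifs <;> omega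

theorem ascentCount_zero {J : Finset ℕ} (hJ : 0 ∉ J) : ascentCount J 0 = 0 := by
  simpa [ascentCount] using fun h => hJ h

theorem ascentCount_of_le {J : Finset ℕ} {m : ℕ} (hJ : ∀ j ∈ J, j ≤ m) :
    ascentCount J m = #J := by
  rw [ascentCount, Finset.filter_true_of_mem hJ]

theorem finRotate_castSucc {m : ℕ} (i : Fin m) : finRotate (m + 1) i.castSucc = i.succ := by
  simp [Fin.coeSucc_eq_succ]

section Ascents

variable {m : ℕ} {J : Finset ℕ}

theorem monotone_and_strictlyAscendsAt_iff (hJ : J ⊆ Finset.Icc 1 m) (w : Fin (m + 1) → ℕ+) :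
    (Monotone w ∧ StrictlyAscendsAt J w) ↔
      Monotone fun i => (w i : ℤ) - ascentCount J i := by
  have hstep (i : Fin m) : (w i.castSucc : ℤ) - ascentCount J i.castSucc ≤
      (w i.succ : ℤ) - ascentCount J i.succ ↔
        w i.castSucc ≤ w i.succ ∧ ((i : ℕ) + 1 ∈ J → w i.castSucc < w i.succ) := by
    rw [Fin.val_succ, Fin.val_castSucc, ascentCount_succ, ← PNat.coe_le_coe, ← PNat.coe_lt_coe]
    split_ifs with hi <;> simp only [hi, true_implies, false_implies, and_true] <;> omega
  simp only [Fin.monotone_iff_le_succ, hstep, forall_and]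
  refine and_congr_right fun _ =>
    ⟨fun h i hi => by simpa [finRotate_castSucc] using h i.castSucc hi, fun h i hi => ?_⟩
  have hi_lt : i < Fin.last m := by
    rw [Fin.lt_def, Fin.val_last]
    have := (Finset.mem_Icc.1 (hJ hi)).2
    omega
  obtain ⟨j, rfl⟩ := Fin.exists_castSucc_eq.2 hi_lt.ne
  simpa [finRotate_castSucc] using h j hi

theorem ascentCount_lt_of_monotone (hJ : J ⊆ Finset.Icc 1 m) {w : Fin (m + 1) → ℕ+}
    (hw : Monotone fun i => (w i : ℤ) - ascentCount J i) (i : Fin (m + 1)) :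
    ascentCount J i < w i := by
  have h0 : ascentCount J 0 = 0 := ascentCount_zero fun h => by simpa using hJ h
  have hmono : (w 0 : ℤ) - ascentCount J (0 : Fin (m + 1)) ≤ (w i : ℤ) - ascentCount J i :=
    hw (Fin.zero_le i)
  rw [Fin.val_zero, h0] at hmono
  have := (w 0).pos
  omega

theorem card_lt_last_of_strictlyAscendsAt (hJ : J ⊆ Finset.Icc 1 m) {w : Fin (m + 1) → ℕ+}
    (hw : Monotone w) (hasc : StrictlyAscendsAt J w) : #J < w (Fin.last m) := by
  simpa [ascentCount_of_le fun j hj => (Finset.mem_Icc.1 (hJ hj)).2] using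
    ascentCount_lt_of_monotone hJ ((monotone_and_strictlyAscendsAt_iff hJ w).1 ⟨hw, hasc⟩)
      (Fin.last m)

def strictlyAscendsAtEquivMonotone (hJ : J ⊆ Finset.Icc 1 m) (s : ℕ) :
    {w : Fin (m + 1) → ℕ+ // Monotone w ∧ StrictlyAscendsAt J w ∧
      (w (Fin.last m) : ℕ) = s + #J + 1} ≃
    {v : Fin (m + 1) → ℕ // Monotone v ∧ v (Fin.last m) = s} where
  toFun w :=
    have hw := (monotone_and_strictlyAscendsAt_iff hJ w.1).1 ⟨w.2.1, w.2.2.1⟩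
    ⟨fun i => w.1 i - ascentCount J i - 1, fun i j hij => by
      have : (w.1 i : ℤ) - ascentCount J i ≤ (w.1 j : ℤ) - ascentCount J j := hw hij
      have := ascentCount_lt_of_monotone hJ hw i
      have := ascentCount_lt_of_monotone hJ hw j
      simp only
      omega, by
      have := w.2.2.2
      simp only [Fin.val_last, ascentCount_of_le fun j hj => (Finset.mem_Icc.1 (hJ hj)).2]
      omega⟩
  invFun v :=
    have hw := (monotone_and_strictlyAscendsAt_iff hJ
      fun i => ⟨v.1 i + ascentCount J i + 1, by omega⟩).2
        fun i j hij => by have := v.2.1 hij; simp only [PNat.mk_coe]; push_cast; omega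
    ⟨_, hw.1, hw.2, by
      simp [ascentCount_of_le fun j hj => (Finset.mem_Icc.1 (hJ hj)).2, v.2.2]⟩
  left_inv w := by
    have := ascentCount_lt_of_monotone hJ
      ((monotone_and_strictlyAscendsAt_iff hJ w.1).1 ⟨w.2.1, w.2.2.1⟩)
    refine Subtype.ext <| funext fun i => PNat.eq ?_
    dsimp only [PNat.mk_coe]
    have := this i
    omega
  right_inv v := by ext; dsimp only [PNat.mk_coe]; omega

theorem card_monotone_strictlyAscendsAt_last_eq (hJ : J ⊆ Finset.Icc 1 m) (s : ℕ) :
    Nat.card {w : Fin (m + 1) → ℕ+ // Monotone w ∧ StrictlyAscendsAt J w ∧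
      (w (Fin.last m) : ℕ) = s + #J + 1} = (s + m).choose m := by
  rw [Nat.card_congr (strictlyAscendsAtEquivMonotone hJ s), card_monotone_fin_last]

theorem psi_Fqsym_eq_X_pow_mul (hJ : J ⊆ Finset.Icc 1 m) :
    psi (Fqsym (m + 1) J) =
      PowerSeries.X ^ (#J + 1) * PowerSeries.mk fun r => ((m + r).choose m : ℤ) := by
  ext r
  rw [coeff_psi_of_monotone (StrictlyAscendsAt J) (f := Fqsym (m + 1) J) fun _ => rfl,
    PowerSeries.coeff_X_pow_mul', PowerSeries.coeff_mk]
  split_ifs with h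
  · obtain ⟨s, rfl⟩ := Nat.exists_eq_add_of_le' h
    rw [← add_assoc, card_monotone_strictlyAscendsAt_last_eq hJ]
    congr 2
    omega
  · simp only [Nat.cast_eq_zero, Nat.card_eq_zero]
    exact Or.inl ⟨fun w =>
      h ((card_lt_last_of_strictlyAscendsAt hJ w.2.1 w.2.2.1).trans_eq w.2.2.2)⟩

end Ascents

theorem mk_choose_sub_eq_X_pow_mul {R : Type*} [CommSemiring R] {n j : ℕ} (h : j < n) :
    PowerSeries.mk (fun r => (((r + n - j - 1).choose n : ℕ) : R)) =
      PowerSeries.X ^ (j + 1) * PowerSeries.mk fun r => ((n + r).choose n : R) := by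
  ext r
  rw [PowerSeries.coeff_X_pow_mul', PowerSeries.coeff_mk, PowerSeries.coeff_mk]
  split_ifs with hr
  · congr 2
    omega
  · rw [Nat.choose_eq_zero_of_lt (by omega), Nat.cast_zero]

/-- `Ψ(F_{n,J}) = q^{|J|+1}/(1−q)^n = (1−q)·Σ_r C(r+n−|J|−1, n) q^r`. -/
theorem psi_Fqsym (n : ℕ) (hn : 0 < n) (J : Finset ℕ)
    (hJ : J ⊆ Finset.Icc 1 (n - 1)) :
    (1 - PowerSeries.X) ^ n * psi (Fqsym n J) = PowerSeries.X ^ (J.card + 1)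
    ∧ psi (Fqsym n J)
        = (1 - PowerSeries.X) *
            PowerSeries.mk (fun r => (((r + n - J.card - 1).choose n : ℕ) : ℤ)) := by
  obtain ⟨m, rfl⟩ : ∃ m, n = m + 1 := ⟨n - 1, by omega⟩
  rw [Nat.add_sub_cancel] at hJ
  have hcard : #J < m + 1 := by
    have := Finset.card_le_card hJ
    rw [Nat.card_Icc] at this
    omega
  have hstep : (1 - PowerSeries.X) * PowerSeries.mk (fun r => ((m + 1 + r).choose (m + 1) : ℤ)) =
      PowerSeries.mk fun r => ((m + r).choose m : ℤ) := by
    rw [← pow_one (1 - PowerSeries.X)]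
    exact PowerSeries.one_sub_pow_mul_invOneSubPow_val_add_eq_invOneSubPow_val ℤ (m + 1) 1
  refine ⟨?_, ?_⟩
  · rw [psi_Fqsym_eq_X_pow_mul hJ, mul_left_comm, mul_comm ((1 - PowerSeries.X) ^ (m + 1)),
      PowerSeries.mk_add_choose_mul_one_sub_pow_eq_one, mul_one]
  · rw [psi_Fqsym_eq_X_pow_mul hJ, mk_choose_sub_eq_X_pow_mul hcard, mul_left_comm, hstep]

end CQSym
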